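/- arXiv:2603.08882 — 6 statements merged into one kernel-verified Lean document; each statement's English description precedes it below -/
import Mathlib

section
/- Let F(X, I) be a smooth vector field on R^{n+2} with coordinates X = (x_ι, x_ρ, x_o) where x_ρ ∈ R^n, such that only the first component f_ι depends on the parameter I. Suppose (X_0, I_0) is an equilibrium (F(X_0, I_0) = 0) at which the Jacobian J = D_X F is invertible, and let X(I) be the implicitly defined equilibrium branch with X(I_0) = X_0. Then the derivative of the last coordinate satisfies x_o'(I_0) = ± f_{ι,I} · det(H) / det(J), where H is the (n+1)×(n+1) matrix obtained from J by deleting the first row and last column, and all derivatives are evaluated at (X_0, I_0). In particular, if f_{ι,I} ≠ 0, then x_o'(I_0) = 0 if and only if det(H) = 0. -/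
/-- The key adjugate entry equals `(-1)^(n+1)` times the determinant of the
homeostasis matrix obtained by deleting the first row and last column. -/
lemma adj_eq_aux (n : ℕ) (J : Matrix (Fin (n+2)) (Fin (n+2)) ℝ)
    (H : Matrix (Fin (n+1)) (Fin (n+1)) ℝ)
    (hH : ∀ i j, H i j = J i.succ j.castSucc) :
    J.adjugate (Fin.last (n+1)) 0 = (-1)^(n+1) * H.det := by
  rw [Matrix.adjugate_apply, Matrix.det_succ_row_zero]
  rw [Finset.sum_eq_single (Fin.last (n+1))]
  · have hrow : (J.updateRow 0 (Pi.single (Fin.last (n+1)) 1)) 0 (Fin.last (n+1)) = 1 := by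
      simp
    have hsub : (J.updateRow 0 (Pi.single (Fin.last (n+1)) 1)).submatrix
        Fin.succ (Fin.last (n+1)).succAbove = H := by
      ext i j
      rw [Fin.succAbove_last]
      simp [Matrix.submatrix_apply, Matrix.updateRow_ne (Fin.succ_ne_zero i), hH]
    rw [hrow, hsub, Fin.val_last]
    ring
  · intro j _ hj
    have hz : (J.updateRow 0 (Pi.single (Fin.last (n+1)) 1)) 0 j = 0 := by
      simp [Pi.single_eq_of_ne hj]
    rw [hz]; ring
  · simp

/-- Cramer's-rule formula for infinitesimal homeostasis in a
single-input single-output network: the derivative of the output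
coordinate of the equilibrium branch equals `± f_{ι,I} · det H / det J`,
and (when `f_{ι,I} ≠ 0`) it vanishes iff `det H = 0`. -/
theorem stmt0 (n : ℕ)
    (F : (Fin (n+2) → ℝ) → ℝ → (Fin (n+2) → ℝ))
    (hF : ContDiff ℝ (⊤ : ℕ∞) (fun p : (Fin (n+2) → ℝ) × ℝ => F p.1 p.2))
    (honly : ∀ i : Fin (n+2), i ≠ 0 → ∀ X I I', F X I i = F X I' i)
    (X₀ : Fin (n+2) → ℝ) (I₀ : ℝ) (heq : F X₀ I₀ = 0)
    (J : Matrix (Fin (n+2)) (Fin (n+2)) ℝ)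
    (hJ : ∀ i j, J i j = fderiv ℝ (fun X => F X I₀ i) X₀ (Pi.single j 1))
    (hJdet : J.det ≠ 0)
    (X : ℝ → Fin (n+2) → ℝ) (hX0 : X I₀ = X₀)
    (hXeq : ∀ᶠ I in nhds I₀, F (X I) I = 0)
    (hXdiff : DifferentiableAt ℝ X I₀)
    (H : Matrix (Fin (n+1)) (Fin (n+1)) ℝ)
    (hH : ∀ i j, H i j = J i.succ j.castSucc) :
    (∃ ε : ℝ, (ε = 1 ∨ ε = -1) ∧
      deriv (fun I => X I (Fin.last (n+1))) I₀ =
        ε * (deriv (fun I => F X₀ I 0) I₀) * H.det / J.det) ∧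
    (deriv (fun I => F X₀ I 0) I₀ ≠ 0 →
      (deriv (fun I => X I (Fin.last (n+1))) I₀ = 0 ↔ H.det = 0)) := by
  classical
  set Φ : ((Fin (n+2) → ℝ) × ℝ) → (Fin (n+2) → ℝ) := fun p => F p.1 p.2 with hΦdef
  have hΦd : DifferentiableAt ℝ Φ (X₀, I₀) :=
    (hF.differentiable (by simp)).differentiableAt
  set L := fderiv ℝ Φ (X₀, I₀) with hLdef
  have hΦ' : HasFDerivAt Φ L (X₀, I₀) := hΦd.hasFDerivAt
  set v : Fin (n+2) → ℝ := deriv X I₀ with hvdef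
  have hXv : HasDerivAt X v I₀ := hXdiff.hasDerivAt
  have hγ : HasDerivAt (fun I => (X I, I)) (v, (1:ℝ)) I₀ :=
    HasDerivAt.prodMk hXv (hasDerivAt_id I₀)
  have hΦ'' : HasFDerivAt Φ L (X I₀, I₀) := by rw [hX0]; exact hΦ'
  have hcomp : HasDerivAt (fun I => Φ (X I, I)) (L (v, 1)) I₀ := by
    have h := HasFDerivAt.comp_hasDerivAt (f := fun I => (X I, I)) I₀ hΦ'' hγ
    simpa [Function.comp_def] using h
  have hzero : (fun I => Φ (X I, I)) =ᶠ[nhds I₀] fun _ => (0 : Fin (n+2) → ℝ) := hXeq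
  have hcomp0 : HasDerivAt (fun I => Φ (X I, I)) 0 I₀ :=
    (hasDerivAt_const I₀ (0 : Fin (n+2) → ℝ)).congr_of_eventuallyEq hzero
  have hLv1 : L (v, 1) = 0 := hcomp.unique hcomp0
  -- partial derivative with respect to X
  have hincl : HasFDerivAt (fun Y : Fin (n+2) → ℝ => (Y, I₀))
      ((ContinuousLinearMap.id ℝ (Fin (n+2) → ℝ)).prod 0) X₀ :=
    HasFDerivAt.prodMk (hasFDerivAt_id X₀) (hasFDerivAt_const I₀ X₀)
  have hpartX : HasFDerivAt (fun Y => F Y I₀)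
      (L.comp ((ContinuousLinearMap.id ℝ (Fin (n+2) → ℝ)).prod 0)) X₀ := by have := HasFDerivAt.comp X₀ hΦ' hincl; exact this
  have hJL : ∀ i j, J i j = L (Pi.single j 1, 0) i := by
    intro i j
    have hi : HasFDerivAt (fun Y => F Y I₀ i)
        ((ContinuousLinearMap.proj i).comp
          (L.comp ((ContinuousLinearMap.id ℝ (Fin (n+2) → ℝ)).prod 0))) X₀ := by
      have h := (ContinuousLinearMap.proj (R := ℝ) (φ := fun _ : Fin (n+2) => ℝ) i).hasFDerivAt.comp X₀ hpartX
      simpa [Function.comp_def] using h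
    rw [hJ i j, hi.fderiv]
    rfl
  -- partial derivative with respect to I
  have hcurve : HasDerivAt (fun I => Φ (X₀, I)) (L (0, 1)) I₀ :=
    HasFDerivAt.comp_hasDerivAt I₀ hΦ' (HasDerivAt.prodMk (hasDerivAt_const I₀ X₀) (hasDerivAt_id I₀))
  have hcurvei : ∀ i : Fin (n+2), HasDerivAt (fun I => F X₀ I i) (L (0, 1) i) I₀ := by
    intro i
    have h := (ContinuousLinearMap.proj (R := ℝ) (φ := fun _ : Fin (n+2) => ℝ) i).hasFDerivAt.comp_hasDerivAt I₀ hcurve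
    simpa [Function.comp_def] using h
  set c : ℝ := deriv (fun I => F X₀ I 0) I₀ with hcdef
  have hc : L (0, 1) 0 = c := ((hcurvei 0).deriv).symm
  have hbz : ∀ i : Fin (n+2), i ≠ 0 → L (0, 1) i = 0 := by
    intro i hi
    have hconst : (fun I : ℝ => F X₀ I i) = fun _ => F X₀ I₀ i := by
      funext I; exact honly i hi X₀ I I₀
    have h := hcurvei i
    rw [hconst] at h
    exact h.unique (hasDerivAt_const _ _)
  have hLI : L (0, 1) = Pi.single (0 : Fin (n+2)) c := by
    funext i
    by_cases hi : i = 0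
    · subst hi; simp [hc]
    · simp [hbz i hi, Pi.single_eq_of_ne hi]
  -- decompose L (v, 1)
  have hsplit : L (v, 1) = L (v, 0) + L (0, 1) := by
    have hp : ((v, (1:ℝ)) : (Fin (n+2) → ℝ) × ℝ) = (v, 0) + (0, 1) := by simp
    rw [hp, map_add]
  -- L (v, 0) = J.mulVec v
  have hLv0 : L (v, 0) = J.mulVec v := by
    have hv : v = ∑ j, v j • (Pi.single j 1 : Fin (n+2) → ℝ) := by
      rw [← Finset.univ_sum_single v]
      congr 1
      funext j k
      by_cases hk : k = j
      · subst hk; simp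
      · simp [Pi.single_eq_of_ne hk]
    have hpair : ((v, (0:ℝ)) : (Fin (n+2) → ℝ) × ℝ)
        = ∑ j, v j • ((Pi.single j 1 : Fin (n+2) → ℝ), (0:ℝ)) := by
      rw [Prod.ext_iff]
      constructor
      · simpa [Prod.fst_sum] using hv
      · simp [Prod.snd_sum]
    rw [hpair, map_sum]
    funext i
    simp only [map_smul]
    rw [Matrix.mulVec]
    simp only [dotProduct]
    rw [Finset.sum_apply]
    congr 1
    funext j
    rw [hJL i j]
    simp [mul_comm]
  have hmv : J.mulVec v = -(Pi.single (0 : Fin (n+2)) c) := by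
    have h : J.mulVec v + Pi.single (0 : Fin (n+2)) c = 0 := by
      rw [← hLv0, ← hLI, ← hsplit, hLv1]
    exact eq_neg_of_add_eq_zero_left h
  have hiu : IsUnit J.det := isUnit_iff_ne_zero.mpr hJdet
  have hv' : v = J⁻¹.mulVec (-(Pi.single (0 : Fin (n+2)) c)) := by
    rw [← hmv, Matrix.mulVec_mulVec, Matrix.nonsing_inv_mul J hiu, Matrix.one_mulVec]
  have hvlast : v (Fin.last (n+1)) = -(J⁻¹ (Fin.last (n+1)) 0 * c) := by
    rw [hv']
    simp [Matrix.mulVec, dotProduct, Pi.single_apply]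
  have hinv : J⁻¹ (Fin.last (n+1)) 0 = J.det⁻¹ * ((-1)^(n+1) * H.det) := by
    rw [Matrix.inv_def]
    simp [Ring.inverse_eq_inv', adj_eq_aux n J H hH]
  have hXlast : HasDerivAt (fun I => X I (Fin.last (n+1))) (v (Fin.last (n+1))) I₀ := by
    have h := (ContinuousLinearMap.proj (R := ℝ) (φ := fun _ : Fin (n+2) => ℝ)
      (Fin.last (n+1))).hasFDerivAt.comp_hasDerivAt I₀ hXv
    simpa [Function.comp_def] using h
  have hderiv : deriv (fun I => X I (Fin.last (n+1))) I₀ = v (Fin.last (n+1)) := hXlast.deriv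
  have hformula : deriv (fun I => X I (Fin.last (n+1))) I₀ = (-1)^n * c * H.det / J.det := by
    rw [hderiv, hvlast, hinv]
    field_simp
    ring
  have hne : ((-1:ℝ)^n) ≠ 0 := pow_ne_zero _ (by norm_num)
  constructor
  · refine ⟨(-1)^n, ?_, hformula⟩
    rcases Nat.even_or_odd n with he | ho
    · exact Or.inl he.neg_one_pow
    · exact Or.inr ho.neg_one_pow
  · intro hc0
    rw [hformula]
    constructor
    · intro h
      rcases div_eq_zero_iff.mp h with h' | h'
      · rcases mul_eq_zero.mp h' with h'' | h''
        · rcases mul_eq_zero.mp h'' with h3 | h3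
          · exact absurd h3 hne
          · exact absurd h3 hc0
        · exact h''
      · exact absurd h' hJdet
    · intro h
      rw [h]
      simp
end

section
/- Let G be a core input-output network with input node ι and output node o. Define a relation on the super-simple nodes by ρ ≥ τ iff ρ precedes τ on every ιo-simple path containing both. Then the super-simple nodes of G are totally ordered by this downstream ordering: for any two distinct super-simple nodes ρ, τ, every ιo-simple path visits them in the same order. -/
/-!
If some `ιo`-simple path visited `ρ` before `τ` and another visited `τ` before `ρ`, then
following the first path up to `ρ` and the second one after `ρ` gives an `ιo`-walk that
avoids `τ`. Shortcutting its cycles yields an `ιo`-simple path using only vertices of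
that walk, hence one missing `τ`, so `τ` would not be super-simple.
-/

/-- A directed simple path from `a` to `b`. -/
def IsSimplePath {V : Type*} (Adj : V → V → Prop) (a b : V) (l : List V) : Prop :=
  l.Chain' Adj ∧ l.head? = some a ∧ l.getLast? = some b ∧ l.Nodup

namespace IsSimplePath

variable {V : Type*} {Adj : V → V → Prop} {a b : V}

lemma exists_subset_of_isChain_cons (l : List V) (hc : (a :: l).IsChain Adj)
    (hb : (a :: l).getLast? = some b) : ∃ p, IsSimplePath Adj a b p ∧ p ⊆ a :: l := by
  induction l generalizing a with
  | nil =>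
    obtain rfl : a = b := by simpa using hb
    exact ⟨[a], ⟨.singleton a, rfl, rfl, List.nodup_singleton a⟩, List.Subset.refl _⟩
  | cons c l ih =>
    obtain ⟨hac, hc⟩ := List.isChain_cons_cons.1 hc
    obtain ⟨p, ⟨hpc, hph, hpl, hpn⟩, hps⟩ := ih hc (by simpa using hb)
    by_cases hap : a ∈ p
    · -- cut the cycle of `p` that returns to `a`
      obtain ⟨s, t, rfl⟩ := List.append_of_mem hap
      refine ⟨a :: t, ⟨hpc.suffix ⟨s, rfl⟩, rfl, ?_, hpn.sublist (List.sublist_append_right _ _)⟩,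
        fun x hx => List.mem_cons_of_mem a (hps (List.mem_append_right s hx))⟩
      rwa [← List.getLast?_append_cons s]
    · obtain ⟨q, rfl⟩ := List.head?_eq_some_iff.1 hph
      refine ⟨a :: c :: q, ⟨List.isChain_cons_cons.2 ⟨hac, hpc⟩, rfl, by simpa using hpl,
        List.nodup_cons.2 ⟨hap, hpn⟩⟩, List.cons_subset_cons a hps⟩

lemma exists_subset_of_isChain {l : List V} (hc : l.IsChain Adj) (ha : l.head? = some a)
    (hb : l.getLast? = some b) : ∃ p, IsSimplePath Adj a b p ∧ p ⊆ l := by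
  obtain ⟨l, rfl⟩ := List.head?_eq_some_iff.1 ha
  exact exists_subset_of_isChain_cons l hc hb

lemma mem_splice {ρ τ : V} {s₁ t₁ s₂ t₂ : List V}
    (hτ : ∀ l, IsSimplePath Adj a b l → τ ∈ l)
    (h₁ : IsSimplePath Adj a b (s₁ ++ ρ :: t₁)) (h₂ : IsSimplePath Adj a b (s₂ ++ ρ :: t₂)) :
    τ ∈ s₁ ++ ρ :: t₂ := by
  obtain ⟨hc₁, hh₁, -, -⟩ := h₁
  obtain ⟨hc₂, -, hl₂, -⟩ := h₂
  have hρt₂ : (ρ :: t₂).IsChain Adj := hc₂.suffix ⟨s₂, rfl⟩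
  have hc : (s₁ ++ ρ :: t₂).IsChain Adj := by
    rw [← List.singleton_append, ← List.append_assoc]
    refine (hc₁.prefix ⟨t₁, by simp⟩).append (hρt₂.suffix ⟨[ρ], rfl⟩) ?_
    intro x hx y hy
    obtain rfl : ρ = x := by simpa using hx
    exact List.isChain_cons.1 hρt₂ |>.1 y hy
  have hh : (s₁ ++ ρ :: t₂).head? = some a := by cases s₁ <;> simpa using hh₁
  have hl : (s₁ ++ ρ :: t₂).getLast? = some b := by
    rwa [List.getLast?_append_cons, ← List.getLast?_append_cons s₂]
  obtain ⟨p, hp, hps⟩ := exists_subset_of_isChain hc hh hl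
  exact hps (hτ p hp)

end IsSimplePath

lemma List.idxOf_lt_idxOf_append_cons_iff {α : Type*} [DecidableEq α] {s t : List α} {ρ τ : α}
    (hρ : ρ ∉ s) : (s ++ ρ :: t).idxOf τ < (s ++ ρ :: t).idxOf ρ ↔ τ ∈ s := by
  rw [List.idxOf_append_of_notMem hρ, List.idxOf_cons_self, Nat.add_zero]
  by_cases hτ : τ ∈ s
  · simpa [List.idxOf_append_of_mem hτ, hτ] using List.idxOf_lt_length_of_mem hτ
  · simp [List.idxOf_append_of_notMem hτ, hτ]

theorem stmt5_general {V : Type*} [DecidableEq V] (Adj : V → V → Prop)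
    (ι o : V)
    (ρ τ : V)
    (hρ : ∀ l : List V, IsSimplePath Adj ι o l → ρ ∈ l)
    (hτ : ∀ l : List V, IsSimplePath Adj ι o l → τ ∈ l)
    (hne : ρ ≠ τ) :
    (∀ l : List V, IsSimplePath Adj ι o l → l.idxOf ρ < l.idxOf τ) ∨
    (∀ l : List V, IsSimplePath Adj ι o l → l.idxOf τ < l.idxOf ρ) := by
  by_contra! ⟨⟨l₂, hl₂, hτρ⟩, ⟨l₁, hl₁, hρτ⟩⟩
  obtain ⟨s₁, t₁, rfl⟩ := List.append_of_mem (hρ l₁ hl₁)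
  obtain ⟨s₂, t₂, rfl⟩ := List.append_of_mem (hρ l₂ hl₂)
  have hρs₁ : ρ ∉ s₁ := fun h => List.disjoint_of_nodup_append hl₁.2.2.2 h List.mem_cons_self
  have hρs₂ : ρ ∉ s₂ := fun h => List.disjoint_of_nodup_append hl₂.2.2.2 h List.mem_cons_self
  have hτs₁ : τ ∉ s₁ := fun h =>
    (List.idxOf_lt_idxOf_append_cons_iff hρs₁).2 h |>.not_ge hρτ
  have hτs₂ : τ ∈ s₂ := (List.idxOf_lt_idxOf_append_cons_iff hρs₂).1 <|
    hτρ.lt_of_ne fun h => hne ((List.idxOf_inj (hτ _ hl₂)).1 h).symm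
  have hτt₂ : τ ∉ ρ :: t₂ := List.disjoint_of_nodup_append hl₂.2.2.2 hτs₂
  rcases List.mem_append.1 (IsSimplePath.mem_splice hτ hl₁ hl₂) with h | h
  exacts [hτs₁ h, hτt₂ h]

/-- Super-simple nodes (nodes on every `ιo`-simple path) of a core input-output
network are totally ordered by the downstream ordering: any two distinct
super-simple nodes appear in the same order on every `ιo`-simple path. -/
theorem stmt5 {V : Type*} [Fintype V] [DecidableEq V] (Adj : V → V → Prop)
    (ι o : V) (hio : ι ≠ o)
    (hcore : ∀ v : V, Relation.ReflTransGen Adj ι v ∧ Relation.ReflTransGen Adj v o)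
    (ρ τ : V)
    (hρ : ∀ l : List V, IsSimplePath Adj ι o l → ρ ∈ l)
    (hτ : ∀ l : List V, IsSimplePath Adj ι o l → τ ∈ l)
    (hne : ρ ≠ τ) :
    (∀ l : List V, IsSimplePath Adj ι o l → l.idxOf ρ < l.idxOf τ) ∨
    (∀ l : List V, IsSimplePath Adj ι o l → l.idxOf τ < l.idxOf ρ) :=
  stmt5_general Adj ι o ρ τ hρ hτ hne
end

section
/- Let G be a core input-output network with distinct input and output nodes, and let ρ be a simple node that is not super-simple. Then there exist adjacent super-simple nodes ρ_1 and ρ_2 (adjacent in the downstream ordering of super-simple nodes) such that ρ lies between ρ_1 and ρ_2, i.e., some ιo-simple path visits ρ_1, then ρ, then ρ_2 in that order, with no other super-simple node between ρ_1 and ρ_2 on that path. -/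
/-- A node lying on every `ιo`-simple path. -/
def IsSuperSimple {V : Type*} (Adj : V → V → Prop) (ι o : V) (v : V) : Prop :=
  ∀ l : List V, IsSimplePath Adj ι o l → v ∈ l

/-! Super-simple nodes behave like cut vertices. If `u` is super-simple and `P₁ ++ u :: P₂`,
`Q₁ ++ u :: Q₂` are `ιo`-simple paths, erasing the loops of the walk `P₁ ++ u :: Q₂` leaves an
`ιo`-simple path, so every super-simple node lies in `P₁ ++ u :: Q₂`. Hence a super-simple node
after `u` on one simple path is after `u` on every one: all simple paths list the super-simple
nodes in the same order. On a simple path through `ρ`, the last super-simple node before `ρ` and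
the first one after it (which exist because `ι` and `o` are super-simple) are therefore
adjacent. -/

theorem List.IsChain.exists_nodup_sublist {α : Type*} {R : α → α → Prop} :
    ∀ {l : List α}, l.IsChain R → ∃ p : List α, p.Sublist l ∧ p.IsChain R ∧ p.Nodup ∧
      p.head? = l.head? ∧ p.getLast? = l.getLast?
  | [], _ => ⟨[], .refl _, .nil, .nil, rfl, rfl⟩
  | x :: l, hl => by
    obtain ⟨hx, hl⟩ := List.isChain_cons.mp hl
    obtain ⟨p, hpl, hp, hpnd, hhead, hlast⟩ := hl.exists_nodup_sublist
    by_cases hxp : x ∈ p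
    · obtain ⟨s, t, rfl⟩ := List.append_of_mem hxp
      have hl_ne : l ≠ [] := by rintro rfl; simp at hpl
      refine ⟨x :: t, (List.sublist_append_right s _).trans hpl |>.cons x,
        hp.right_of_append, hpnd.sublist (List.sublist_append_right _ _), rfl, ?_⟩
      rw [List.getLast?_cons_of_ne_nil hl_ne, ← hlast,
        List.getLast?_append_of_ne_nil _ (List.cons_ne_nil _ _)]
    · refine ⟨x :: p, hpl.cons_cons x, hp.cons (hhead ▸ hx), hpnd.cons hxp, rfl, ?_⟩
      simp only [List.getLast?_cons, hlast]

theorem List.Nodup.idxOf_lt_idxOf_middle_iff {α : Type*} [DecidableEq α] {l₁ l₂ : List α}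
    {u v : α} (h : (l₁ ++ u :: l₂).Nodup) (hv : v ∈ l₁ ++ u :: l₂) :
    (l₁ ++ u :: l₂).idxOf u < (l₁ ++ u :: l₂).idxOf v ↔ v ∈ l₂ := by
  rw [List.nodup_middle, List.nodup_cons, List.mem_append, not_or] at h
  obtain ⟨⟨hu₁, hu₂⟩, hnd⟩ := h
  have hdisj := List.disjoint_of_nodup_append hnd
  obtain hv₁ | rfl | hv₂ : v ∈ l₁ ∨ v = u ∨ v ∈ l₂ := by simpa using hv
  · rw [List.idxOf_append_of_mem hv₁, List.idxOf_append_of_notMem hu₁]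
    simp only [(List.idxOf_lt_length_of_mem hv₁).trans_le (Nat.le_add_right _ _) |>.not_gt,
      false_iff]
    exact hdisj hv₁
  · simp [hu₂]
  · have huv : u ≠ v := fun h => hu₂ (h ▸ hv₂)
    rw [List.idxOf_append_of_notMem hu₁, List.idxOf_append_of_notMem fun h => hdisj h hv₂,
      List.idxOf_cons_self, List.idxOf_cons_ne _ huv]
    simp [hv₂]

theorem List.exists_nearest_around {α : Type*} [DecidableEq α] (l : List α) (S : α → Prop)
    {ρ : α} (hSρ : ¬ S ρ) (hbefore : ∃ a ∈ l, S a ∧ l.idxOf a < l.idxOf ρ)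
    (hafter : ∃ b ∈ l, S b ∧ l.idxOf ρ < l.idxOf b) :
    ∃ ρ₁ ρ₂, S ρ₁ ∧ S ρ₂ ∧ l.idxOf ρ₁ < l.idxOf ρ ∧ l.idxOf ρ < l.idxOf ρ₂ ∧
      ∀ σ ∈ l, S σ → l.idxOf σ ≤ l.idxOf ρ₁ ∨ l.idxOf ρ₂ ≤ l.idxOf σ := by
  classical
  obtain ⟨ρ₁, h₁, hmax⟩ := Finset.exists_max_image
    (l.toFinset.filter fun x => S x ∧ l.idxOf x < l.idxOf ρ) l.idxOf
    (by obtain ⟨a, ha, hSa, hlt⟩ := hbefore; exact ⟨a, by simp [ha, hSa, hlt]⟩)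
  obtain ⟨ρ₂, h₂, hmin⟩ := Finset.exists_min_image
    (l.toFinset.filter fun x => S x ∧ l.idxOf ρ < l.idxOf x) l.idxOf
    (by obtain ⟨b, hb, hSb, hlt⟩ := hafter; exact ⟨b, by simp [hb, hSb, hlt]⟩)
  simp only [Finset.mem_filter, List.mem_toFinset, and_imp] at h₁ h₂ hmax hmin
  refine ⟨ρ₁, ρ₂, h₁.2.1, h₂.2.1, h₁.2.2, h₂.2.2, fun σ hσ hSσ => ?_⟩
  have hσρ : l.idxOf σ ≠ l.idxOf ρ := fun h => hSρ ((List.idxOf_inj hσ).mp h ▸ hSσ)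
  rcases hσρ.lt_or_gt with h | h
  · exact .inl (hmax σ hσ hSσ h)
  · exact .inr (hmin σ hσ hSσ h)

section SimplePath

variable {V : Type*} {Adj : V → V → Prop} {ι o : V}

theorem isSuperSimple_start : IsSuperSimple Adj ι o ι :=
  fun _ hl => List.mem_of_mem_head? hl.2.1

theorem isSuperSimple_end : IsSuperSimple Adj ι o o :=
  fun _ hl => List.mem_of_mem_getLast? hl.2.2.1

theorem IsSuperSimple.mem_splice {u v : V} {P₁ P₂ Q₁ Q₂ : List V}
    (hv : IsSuperSimple Adj ι o v) (hP : IsSimplePath Adj ι o (P₁ ++ u :: P₂))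
    (hQ : IsSimplePath Adj ι o (Q₁ ++ u :: Q₂)) : v ∈ P₁ ++ u :: Q₂ := by
  obtain ⟨hPc, hPh, -, -⟩ := hP
  obtain ⟨hQc, -, hQl, -⟩ := hQ
  have hchain : (P₁ ++ u :: Q₂).IsChain Adj := by
    have hPc : (P₁ ++ [u] ++ P₂).IsChain Adj := by
      rw [List.append_assoc, List.singleton_append]; exact hPc
    have hQc : (Q₁ ++ ([u] ++ Q₂)).IsChain Adj := hQc
    simpa using hPc.left_of_append.append_overlap hQc.right_of_append (List.cons_ne_nil _ _)
  have hhead : (P₁ ++ u :: Q₂).head? = some ι := by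
    rw [← hPh, List.head?_append, List.head?_append, List.head?_cons, List.head?_cons]
  have hlast : (P₁ ++ u :: Q₂).getLast? = some o := by
    rw [← hQl, List.getLast?_append_of_ne_nil _ (List.cons_ne_nil _ _),
      List.getLast?_append_of_ne_nil _ (List.cons_ne_nil _ _)]
  obtain ⟨p, hp, hpc, hpnd, hph, hpl⟩ := hchain.exists_nodup_sublist
  exact hp.subset (hv p ⟨hpc, hph.trans hhead, hpl.trans hlast, hpnd⟩)

variable [DecidableEq V]

theorem IsSimplePath.idxOf_start_lt {l : List V} {x : V} (hl : IsSimplePath Adj ι o l)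
    (hx : x ∈ l) (hxι : x ≠ ι) : l.idxOf ι < l.idxOf x := by
  obtain ⟨t, rfl⟩ := List.head?_eq_some_iff.mp hl.2.1
  exact (List.Nodup.idxOf_lt_idxOf_middle_iff (l₁ := []) hl.2.2.2 hx).mpr
    (by simpa [hxι] using hx)

theorem IsSimplePath.idxOf_lt_end {l : List V} {x : V} (hl : IsSimplePath Adj ι o l)
    (hx : x ∈ l) (hxo : x ≠ o) : l.idxOf x < l.idxOf o := by
  obtain ⟨ys, rfl⟩ := List.getLast?_eq_some_iff.mp hl.2.2.1
  have hle := (List.Nodup.idxOf_lt_idxOf_middle_iff (l₂ := []) hl.2.2.2 hx).not.mpr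
    List.not_mem_nil
  exact lt_of_le_of_ne (not_lt.mp hle) fun h => hxo ((List.idxOf_inj hx).mp h)

theorem IsSuperSimple.idxOf_lt_idxOf {u v : V} {P Q : List V} (hu : IsSuperSimple Adj ι o u)
    (hv : IsSuperSimple Adj ι o v) (hP : IsSimplePath Adj ι o P) (hQ : IsSimplePath Adj ι o Q)
    (h : P.idxOf u < P.idxOf v) : Q.idxOf u < Q.idxOf v := by
  obtain ⟨P₁, P₂, rfl⟩ := List.append_of_mem (hu P hP)
  obtain ⟨Q₁, Q₂, rfl⟩ := List.append_of_mem (hu Q hQ)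
  have hnd := hP.2.2.2
  rw [hnd.idxOf_lt_idxOf_middle_iff (hv _ hP)] at h
  rw [hQ.2.2.2.idxOf_lt_idxOf_middle_iff (hv _ hQ)]
  have hvP₁ : v ∉ P₁ := fun hv₁ => List.disjoint_of_nodup_append hnd hv₁ (.tail _ h)
  have hvu : v ≠ u := by
    rintro rfl
    exact (List.nodup_cons.mp (List.nodup_middle.mp hnd)).1 (List.mem_append_right _ h)
  simpa [hvP₁, hvu] using hv.mem_splice hP hQ

end SimplePath

theorem stmt6_general {V : Type*} [DecidableEq V] (Adj : V → V → Prop)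
    (ι o ρ : V)
    (hsimple : ∃ l : List V, IsSimplePath Adj ι o l ∧ ρ ∈ l)
    (hnotss : ¬ IsSuperSimple Adj ι o ρ) :
    ∃ ρ₁ ρ₂ : V,
      IsSuperSimple Adj ι o ρ₁ ∧ IsSuperSimple Adj ι o ρ₂ ∧ ρ₁ ≠ ρ₂ ∧
      (∀ l : List V, IsSimplePath Adj ι o l → l.idxOf ρ₁ < l.idxOf ρ₂) ∧
      (¬ ∃ σ : V, IsSuperSimple Adj ι o σ ∧ σ ≠ ρ₁ ∧ σ ≠ ρ₂ ∧
        ∃ l : List V, IsSimplePath Adj ι o l ∧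
          l.idxOf ρ₁ < l.idxOf σ ∧ l.idxOf σ < l.idxOf ρ₂) ∧
      ∃ l : List V, IsSimplePath Adj ι o l ∧
        l.idxOf ρ₁ < l.idxOf ρ ∧ l.idxOf ρ < l.idxOf ρ₂ := by
  obtain ⟨P, hP, hρP⟩ := hsimple
  have hρι : ρ ≠ ι := fun h => hnotss (h ▸ isSuperSimple_start)
  have hρo : ρ ≠ o := fun h => hnotss (h ▸ isSuperSimple_end)
  obtain ⟨ρ₁, ρ₂, hS₁, hS₂, h₁, h₂, hgap⟩ := P.exists_nearest_around (IsSuperSimple Adj ι o)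
    hnotss ⟨ι, isSuperSimple_start P hP, isSuperSimple_start, hP.idxOf_start_lt hρP hρι⟩
    ⟨o, isSuperSimple_end P hP, isSuperSimple_end, hP.idxOf_lt_end hρP hρo⟩
  refine ⟨ρ₁, ρ₂, hS₁, hS₂, ?_, fun L hL => hS₁.idxOf_lt_idxOf hS₂ hP hL (h₁.trans h₂), ?_,
    P, hP, h₁, h₂⟩
  · rintro rfl
    omega
  · rintro ⟨σ, hSσ, -, -, L, hL, hσ₁, hσ₂⟩
    have h₁σ := hS₁.idxOf_lt_idxOf hSσ hL hP hσ₁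
    have hσ₂ := hSσ.idxOf_lt_idxOf hS₂ hL hP hσ₂
    rcases hgap σ (hSσ P hP) hSσ with h | h <;> omega

/-- In a core input-output network with distinct input and output, every simple
node `ρ` that is not super-simple lies between a pair of adjacent super-simple
nodes: some `ιo`-simple path visits `ρ₁`, then `ρ`, then `ρ₂` in that order,
and no other super-simple node lies strictly between `ρ₁` and `ρ₂`. -/
theorem stmt6 {V : Type*} [Fintype V] [DecidableEq V] (Adj : V → V → Prop)
    (ι o ρ : V) (hio : ι ≠ o)
    (hcore : ∀ v : V, Relation.ReflTransGen Adj ι v ∧ Relation.ReflTransGen Adj v o)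
    (hsimple : ∃ l : List V, IsSimplePath Adj ι o l ∧ ρ ∈ l)
    (hnotss : ¬ IsSuperSimple Adj ι o ρ) :
    ∃ ρ₁ ρ₂ : V,
      IsSuperSimple Adj ι o ρ₁ ∧ IsSuperSimple Adj ι o ρ₂ ∧ ρ₁ ≠ ρ₂ ∧
      (∀ l : List V, IsSimplePath Adj ι o l → l.idxOf ρ₁ < l.idxOf ρ₂) ∧
      (¬ ∃ σ : V, IsSuperSimple Adj ι o σ ∧ σ ≠ ρ₁ ∧ σ ≠ ρ₂ ∧
        ∃ l : List V, IsSimplePath Adj ι o l ∧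
          l.idxOf ρ₁ < l.idxOf σ ∧ l.idxOf σ < l.idxOf ρ₂) ∧
      ∃ l : List V, IsSimplePath Adj ι o l ∧
        l.idxOf ρ₁ < l.idxOf ρ ∧ l.idxOf ρ < l.idxOf ρ₂ :=
  stmt6_general Adj ι o ρ hsimple hnotss
end

section
/- Let G be an input-output network with n input nodes ι_1,...,ι_n all driven by one parameter I, N regulatory nodes, and one output node o, with admissible system ẋ_ι = f_ι(x_ι, x_ρ, x_o, I), ẋ_ρ = f_ρ(x_ι, x_ρ, x_o), ẋ_o = f_o(x_ι, x_ρ, x_o). Construct the augmented network G◇ by adding a new input node with variable x_I and dynamics ẋ_I = I - x_I, and replacing each occurrence of I in f_{ι_j} by x_I. Then the homeostasis matrix H◇ of the augmented system (obtained from the augmented Jacobian by deleting the row of the new input node and the column of the output node) satisfies det(H◇) = ± det(⟨H⟩), where ⟨H⟩ is the generalized homeostasis matrix of the original system, obtained from its Jacobian by replacing the output-node column with the column (−f_{ι,I}, 0, 0)^T, and the partial derivatives f_{ι_j, x_I} of the augmented system equal f_{ι_j, I} at any equilibrium. -/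
/-- Theorem GenH: augmenting a single-input network with `n` input nodes by a new
input node `x_I` (dynamics `ẋ_I = I − x_I`, with `I` replaced by `x_I` in the
input-node equations) yields a homeostasis matrix `H◇` whose determinant equals
the determinant of the generalized homeostasis matrix `⟨H⟩` up to sign, and the
partial derivatives of the input-node components w.r.t. `x_I` at equilibrium
equal the corresponding derivatives w.r.t. `I`. -/
theorem stmt7 (n N : ℕ)
    (F : (Fin (n+N+1) → ℝ) → ℝ → (Fin (n+N+1) → ℝ))
    (hF : ContDiff ℝ (⊤ : ℕ∞) (fun p : (Fin (n+N+1) → ℝ) × ℝ => F p.1 p.2))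
    (hinput : ∀ i : Fin (n+N+1), n ≤ (i : ℕ) → ∀ X I I', F X I i = F X I' i)
    (X₀ : Fin (n+N+1) → ℝ) (I₀ : ℝ) (heq : F X₀ I₀ = 0)
    (J : Matrix (Fin (n+N+1)) (Fin (n+N+1)) ℝ)
    (hJ : ∀ i j, J i j = fderiv ℝ (fun X => F X I₀ i) X₀ (Pi.single j 1))
    (c : Fin (n+N+1) → ℝ)
    (hc : ∀ i, c i = deriv (fun I => F X₀ I i) I₀)
    (Faug : (Fin (n+N+2) → ℝ) → ℝ → (Fin (n+N+2) → ℝ))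
    (hFaug : ∀ Y I, Faug Y I = Fin.cons (I - Y 0) (fun i => F (Y ∘ Fin.succ) (Y 0) i))
    (Haug : Matrix (Fin (n+N+1)) (Fin (n+N+1)) ℝ)
    (hHaug : ∀ i j, Haug i j =
      fderiv ℝ (fun Y => Faug Y I₀ i.succ) (Fin.cons I₀ X₀) (Pi.single j.castSucc 1))
    (Hgen : Matrix (Fin (n+N+1)) (Fin (n+N+1)) ℝ)
    (hHgen : ∀ i j, Hgen i j = if j = Fin.last (n+N) then -(c i) else J i j) :
    (∀ i : Fin (n+N+1), (i : ℕ) < n → Haug i 0 = c i) ∧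
    ∃ ε : ℝ, (ε = 1 ∨ ε = -1) ∧ Haug.det = ε * Hgen.det := by
  classical
  -- differentiability of each component
  have hFd : ∀ i : Fin (n+N+1),
      Differentiable ℝ (fun p : (Fin (n+N+1) → ℝ) × ℝ => F p.1 p.2 i) := by
    intro i
    exact (differentiable_pi.mp (hF.differentiable (by simp))) i
  set Df : Fin (n+N+1) → ((Fin (n+N+1) → ℝ) × ℝ) →L[ℝ] ℝ :=
    fun i => fderiv ℝ (fun p : (Fin (n+N+1) → ℝ) × ℝ => F p.1 p.2 i) (X₀, I₀) with hDf
  -- partial derivative in X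
  have hA : ∀ (i : Fin (n+N+1)) (w : Fin (n+N+1) → ℝ),
      fderiv ℝ (fun X => F X I₀ i) X₀ w = Df i (w, 0) := by
    intro i w
    have h1 : HasFDerivAt (fun X : Fin (n+N+1) → ℝ => (X, I₀))
        (ContinuousLinearMap.inl ℝ (Fin (n+N+1) → ℝ) ℝ) X₀ :=
      hasFDerivAt_prodMk_left X₀ I₀
    have h2 : HasFDerivAt (fun p : (Fin (n+N+1) → ℝ) × ℝ => F p.1 p.2 i)
        (Df i) (X₀, I₀) := ((hFd i) (X₀, I₀)).hasFDerivAt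
    have h3 := (h2.comp X₀ h1).fderiv
    rw [show (fun X : Fin (n+N+1) → ℝ => F X I₀ i) =
        ((fun p : (Fin (n+N+1) → ℝ) × ℝ => F p.1 p.2 i) ∘
          fun X : Fin (n+N+1) → ℝ => (X, I₀)) from rfl, h3]
    rfl
  -- partial derivative in I
  have hB : ∀ i : Fin (n+N+1), c i = Df i (0, 1) := by
    intro i
    have h1 : HasFDerivAt (fun I : ℝ => (X₀, I))
        (ContinuousLinearMap.inr ℝ (Fin (n+N+1) → ℝ) ℝ) I₀ :=
      hasFDerivAt_prodMk_right X₀ I₀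
    have h2 : HasFDerivAt (fun p : (Fin (n+N+1) → ℝ) × ℝ => F p.1 p.2 i)
        (Df i) (X₀, I₀) := ((hFd i) (X₀, I₀)).hasFDerivAt
    have h3 : HasDerivAt (fun I : ℝ => F X₀ I i)
        (((Df i).comp (ContinuousLinearMap.inr ℝ (Fin (n+N+1) → ℝ) ℝ)) 1) I₀ :=
      (h2.comp I₀ h1).hasDerivAt
    rw [hc i, h3.deriv]
    rfl
  -- the augmented fderiv
  set Y₀ : Fin (n+N+2) → ℝ := Fin.cons I₀ X₀ with hY₀
  set L : (Fin (n+N+2) → ℝ) →L[ℝ] (Fin (n+N+1) → ℝ) × ℝ :=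
    (ContinuousLinearMap.pi fun k : Fin (n+N+1) =>
      ContinuousLinearMap.proj (R := ℝ) (φ := fun _ : Fin (n+N+2) => ℝ) k.succ).prod
      (ContinuousLinearMap.proj (R := ℝ) (φ := fun _ : Fin (n+N+2) => ℝ) 0) with hL
  have hLapp : ∀ v : Fin (n+N+2) → ℝ, L v = (fun k => v k.succ, v 0) := fun v => rfl
  have hLY₀ : L Y₀ = (X₀, I₀) := by
    rw [hLapp]
    refine Prod.ext ?_ ?_
    · funext k; simp [hY₀, Fin.cons_succ]
    · simp [hY₀]
  have hC : ∀ (i : Fin (n+N+1)) (v : Fin (n+N+2) → ℝ),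
      fderiv ℝ (fun Y => Faug Y I₀ i.succ) Y₀ v = Df i (fun k => v k.succ, v 0) := by
    intro i v
    have hfun : (fun Y : Fin (n+N+2) → ℝ => Faug Y I₀ i.succ) =
        ((fun p : (Fin (n+N+1) → ℝ) × ℝ => F p.1 p.2 i) ∘ fun Y => L Y) := by
      funext Y
      rw [hFaug]
      simp [Fin.cons_succ, hLapp]
      rfl
    have h2 : HasFDerivAt (fun p : (Fin (n+N+1) → ℝ) × ℝ => F p.1 p.2 i)
        (Df i) (L Y₀) := by rw [hLY₀]; exact ((hFd i) (X₀, I₀)).hasFDerivAt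
    have h3 := (h2.comp Y₀ L.hasFDerivAt).fderiv
    rw [hfun, h3, ContinuousLinearMap.comp_apply, hLapp]
  -- entries of Haug
  have key0 : ∀ i : Fin (n+N+1), Haug i 0 = c i := by
    intro i
    rw [hHaug, hC]
    have e1 : (fun k : Fin (n+N+1) =>
        (Pi.single ((0 : Fin (n+N+1)).castSucc) (1:ℝ) : Fin (n+N+2) → ℝ) k.succ)
        = (0 : Fin (n+N+1) → ℝ) := by
      funext k
      have hk : k.succ ≠ (0 : Fin (n+N+1)).castSucc := by
        rw [Fin.castSucc_zero]
        exact Fin.succ_ne_zero k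
      simp only [Pi.single_apply, if_neg hk, Pi.zero_apply]
    have e2 : (Pi.single ((0 : Fin (n+N+1)).castSucc) (1:ℝ) : Fin (n+N+2) → ℝ) 0 = 1 := by
      rw [Fin.castSucc_zero, Pi.single_eq_same]
    rw [e1, e2, ← hB i]
  have keyS : ∀ (i : Fin (n+N+1)) (k : Fin (n+N)),
      Haug i k.succ = J i k.castSucc := by
    intro i k
    rw [hHaug, hC]
    have e1 : (fun m : Fin (n+N+1) =>
        (Pi.single ((k.succ).castSucc) (1:ℝ) : Fin (n+N+2) → ℝ) m.succ)
        = (Pi.single k.castSucc 1 : Fin (n+N+1) → ℝ) := by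
      funext m
      have h : (m.succ = k.succ.castSucc) ↔ (m = k.castSucc) := by
        simp only [Fin.ext_iff, Fin.val_succ, Fin.coe_castSucc]
        omega
      simp only [Pi.single_apply]
      rw [if_congr h rfl rfl]
    have e2 : (Pi.single ((k.succ).castSucc) (1:ℝ) : Fin (n+N+2) → ℝ) 0 = 0 := by
      have h0 : (0 : Fin (n+N+2)) ≠ k.succ.castSucc := by
        have : (k.succ.castSucc : Fin (n+N+2)).val = k.val + 1 := rfl
        simp [Fin.ext_iff, this]
      simp only [Pi.single_apply, if_neg h0]
    rw [e1, e2, hJ, hA]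
  -- permutation bookkeeping
  set σ : Equiv.Perm (Fin (n+N+1)) := (finRotate (n+N+1)).symm with hσ
  set M : Matrix (Fin (n+N+1)) (Fin (n+N+1)) ℝ := Hgen.submatrix id σ with hM
  have hσ0 : σ 0 = Fin.last (n+N) := by
    rw [hσ, Equiv.symm_apply_eq, finRotate_succ_apply, Fin.last_add_one]
  have hσS : ∀ k : Fin (n+N), σ k.succ = k.castSucc := by
    intro k
    rw [hσ, Equiv.symm_apply_eq, finRotate_succ_apply, Fin.coeSucc_eq_succ]
  have hM0 : ∀ i, M i 0 = -(c i) := by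
    intro i
    rw [hM]
    simp only [Matrix.submatrix_apply, id_eq, hσ0, hHgen]
    simp
  have hMS : ∀ (i : Fin (n+N+1)) (k : Fin (n+N)), M i k.succ = J i k.castSucc := by
    intro i k
    rw [hM]
    simp only [Matrix.submatrix_apply, id_eq, hσS k, hHgen,
      if_neg (Fin.castSucc_lt_last k).ne]
  have hHaugM : Haug = M.updateCol 0 ((-1 : ℝ) • fun i => M i 0) := by
    funext i j
    refine Fin.cases ?_ ?_ j
    · rw [key0, Matrix.updateCol_apply, if_pos rfl]
      simp [hM0 i]
    · intro k
      rw [keyS, Matrix.updateCol_apply, if_neg (Fin.succ_ne_zero k), hMS]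
  have hdetM : M.det = (-1 : ℝ)^(n+N) * Hgen.det := by
    rw [hM, Matrix.det_permute', hσ]
    congr 1
    rw [Equiv.Perm.sign_symm, sign_finRotate]
    simp
  have hdetH : Haug.det = (-1 : ℝ)^(n+N+1) * Hgen.det := by
    rw [hHaugM, Matrix.det_updateCol_smul,
      Matrix.updateCol_eq_self, hdetM]
    ring
  refine ⟨fun i _ => key0 i, (-1 : ℝ)^(n+N+1), ?_, hdetH⟩
  rcases Nat.even_or_odd (n+N+1) with h | h
  · exact Or.inl (h.neg_one_pow)
  · exact Or.inr (h.neg_one_pow)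
end

section
/- With notation as in the multiple-input-node Cramer's rule setup: if F(X, I) is smooth with stable equilibrium branch X̃(I) satisfying F(X̃(I), I) ≡ 0 and det J ≠ 0, then the output coordinate satisfies x_o'(I) = det⟨H⟩ / det(J), where ⟨H⟩ is obtained from J by replacing the output column with (−f_{ι,I}, 0, 0)^T, all evaluated at (X̃(I), I). Consequently I_0 is a point of infinitesimal homeostasis (x_o'(I_0) = 0) if and only if det⟨H⟩ = 0 at (X̃(I_0), I_0). -/
/-- Multiple-input-node Cramer's rule: along the equilibrium branch `X̃(I)`,
the derivative of the output coordinate equals `det⟨H⟩ / det J`, so `I₀` is a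
point of infinitesimal homeostasis iff `det⟨H⟩ = 0` there. -/
theorem stmt9 (n N : ℕ)
    (F : (Fin (n+N+1) → ℝ) → ℝ → (Fin (n+N+1) → ℝ))
    (hF : ContDiff ℝ (⊤ : ℕ∞) (fun p : (Fin (n+N+1) → ℝ) × ℝ => F p.1 p.2))
    (hinput : ∀ i : Fin (n+N+1), n ≤ (i : ℕ) → ∀ X I I', F X I i = F X I' i)
    (Xt : ℝ → Fin (n+N+1) → ℝ)
    (hXt : ∀ I, F (Xt I) I = 0)
    (hXsmooth : ContDiff ℝ (⊤ : ℕ∞) Xt)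
    (I₀ : ℝ)
    (J : Matrix (Fin (n+N+1)) (Fin (n+N+1)) ℝ)
    (hJ : ∀ i j, J i j = fderiv ℝ (fun X => F X I₀ i) (Xt I₀) (Pi.single j 1))
    (hJdet : J.det ≠ 0)
    (Hgen : Matrix (Fin (n+N+1)) (Fin (n+N+1)) ℝ)
    (hHgen : ∀ i j, Hgen i j =
      if j = Fin.last (n+N) then -(deriv (fun I => F (Xt I₀) I i) I₀) else J i j) :
    deriv (fun I => Xt I (Fin.last (n+N))) I₀ = Hgen.det / J.det ∧
    (deriv (fun I => Xt I (Fin.last (n+N))) I₀ = 0 ↔ Hgen.det = 0) := by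
  set p₀ : (Fin (n+N+1) → ℝ) × ℝ := (Xt I₀, I₀) with hp₀
  have hFd : ∀ i : Fin (n+N+1), Differentiable ℝ (fun p : (Fin (n+N+1) → ℝ) × ℝ => F p.1 p.2 i) := by
    intro i
    exact (differentiable_pi.mp (hF.differentiable (by simp))) i
  set L : Fin (n+N+1) → ((Fin (n+N+1) → ℝ) × ℝ →L[ℝ] ℝ) :=
    fun i => fderiv ℝ (fun p : (Fin (n+N+1) → ℝ) × ℝ => F p.1 p.2 i) p₀ with hL
  have hXd : Differentiable ℝ Xt := hXsmooth.differentiable (by simp)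
  set v : Fin (n+N+1) → ℝ := fderiv ℝ Xt I₀ 1 with hv
  have hcurve : HasDerivAt (fun I : ℝ => ((Xt I, I) : (Fin (n+N+1) → ℝ) × ℝ)) (v, 1) I₀ :=
    HasDerivAt.prodMk ((hXd I₀).hasFDerivAt.hasDerivAt) (hasDerivAt_id I₀)
  have hzero : ∀ i : Fin (n+N+1), L i (v, 1) = 0 := by
    intro i
    have hcomp : HasDerivAt ((fun p : (Fin (n+N+1) → ℝ) × ℝ => F p.1 p.2 i) ∘
        (fun I : ℝ => ((Xt I, I) : (Fin (n+N+1) → ℝ) × ℝ))) (L i (v, 1)) I₀ :=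
      HasFDerivAt.comp_hasDerivAt (f := fun I : ℝ => ((Xt I, I) : (Fin (n+N+1) → ℝ) × ℝ)) I₀ ((hFd i p₀).hasFDerivAt) hcurve
    have hconst : ((fun p : (Fin (n+N+1) → ℝ) × ℝ => F p.1 p.2 i) ∘ (fun I : ℝ => ((Xt I, I) : (Fin (n+N+1) → ℝ) × ℝ))) = fun _ => (0 : ℝ) := by
      funext I
      simp only [Function.comp]
      rw [hXt I]; rfl
    rw [hconst] at hcomp
    have := hcomp.deriv
    simpa using this.symm
  have hX : ∀ (i : Fin (n+N+1)) (w : Fin (n+N+1) → ℝ),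
      fderiv ℝ (fun X => F X I₀ i) (Xt I₀) w = L i (w, 0) := by
    intro i w
    have h1 : HasFDerivAt (fun X : Fin (n+N+1) → ℝ => ((X, I₀) : (Fin (n+N+1) → ℝ) × ℝ))
        (ContinuousLinearMap.inl ℝ (Fin (n+N+1) → ℝ) ℝ) (Xt I₀) :=
      HasFDerivAt.prodMk (hasFDerivAt_id _) (hasFDerivAt_const _ _)
    have h2 := ((hFd i p₀).hasFDerivAt).comp (Xt I₀) h1
    have h3 : HasFDerivAt (fun X : Fin (n+N+1) → ℝ => F X I₀ i)
        ((L i).comp (ContinuousLinearMap.inl ℝ (Fin (n+N+1) → ℝ) ℝ)) (Xt I₀) := h2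
    rw [h3.fderiv]; rfl
  have hI : ∀ i : Fin (n+N+1), deriv (fun I => F (Xt I₀) I i) I₀ = L i (0, 1) := by
    intro i
    have h1 : HasDerivAt (fun I : ℝ => ((Xt I₀, I) : (Fin (n+N+1) → ℝ) × ℝ)) (0, 1) I₀ :=
      HasDerivAt.prodMk (hasDerivAt_const _ _) (hasDerivAt_id I₀)
    have h2 := ((hFd i p₀).hasFDerivAt).comp_hasDerivAt I₀ h1
    have h3 : HasDerivAt (fun I : ℝ => F (Xt I₀) I i) (L i (0, 1)) I₀ := h2
    exact h3.deriv
  set b : Fin (n+N+1) → ℝ := fun i => -(deriv (fun I => F (Xt I₀) I i) I₀) with hb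
  have hmulVec : J.mulVec v = b := by
    funext i
    have hsplit : L i (v, 1) = L i (v, 0) + L i (0, 1) := by
      have h : ((v, 1) : (Fin (n+N+1) → ℝ) × ℝ) = (v, 0) + (0, 1) := by simp [Prod.ext_iff]
      rw [h, map_add]
    have hvs : v = ∑ j, v j • (Pi.single j 1 : Fin (n+N+1) → ℝ) := by
      funext k
      simp [Pi.single_apply, Finset.sum_apply, mul_comm]
    have hsum : L i (v, 0) = ∑ j, v j * L i (Pi.single j 1, 0) := by
      have hps : ((v, 0) : (Fin (n+N+1) → ℝ) × ℝ)
          = ∑ j, v j • (((Pi.single j 1 : Fin (n+N+1) → ℝ), (0:ℝ)) : (Fin (n+N+1) → ℝ) × ℝ) := by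
        rw [Prod.ext_iff, Prod.fst_sum, Prod.snd_sum]
        constructor
        · simpa using hvs
        · simp
      rw [hps, map_sum]
      refine Finset.sum_congr rfl fun j _ => ?_
      rw [map_smul, smul_eq_mul]
    have key : ∑ j, v j * L i (Pi.single j 1, 0) + L i (0, 1) = 0 := by
      rw [← hsum, ← hsplit]; exact hzero i
    have hme : J.mulVec v i = ∑ j, v j * L i (Pi.single j 1, 0) := by
      simp only [Matrix.mulVec, dotProduct]
      refine Finset.sum_congr rfl fun j _ => ?_
      rw [hJ i j, hX i]; ring
    rw [hme, hb]
    simp only [hI i]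
    linarith [key]
  have hHup : Hgen = J.updateCol (Fin.last (n+N)) b := by
    funext i j
    rw [hHgen i j, Matrix.updateCol_apply]
  have hUnit : IsUnit J.det := isUnit_iff_ne_zero.mpr hJdet
  have hcram : J.det • v = Matrix.cramer J b := by
    rw [← Matrix.det_smul_inv_mulVec_eq_cramer J b hUnit, ← hmulVec,
      Matrix.mulVec_mulVec, Matrix.nonsing_inv_mul J hUnit, Matrix.one_mulVec]
  have hlast : J.det * v (Fin.last (n+N)) = Hgen.det := by
    have h := congrFun hcram (Fin.last (n+N))
    simpa [Matrix.cramer_apply, ← hHup] using h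
  have hvd : deriv (fun I => Xt I (Fin.last (n+N))) I₀ = v (Fin.last (n+N)) := by
    have h1 : HasDerivAt Xt (fderiv ℝ Xt I₀ 1) I₀ := (hXd I₀).hasFDerivAt.hasDerivAt
    rw [hasDerivAt_pi] at h1
    exact (h1 (Fin.last (n+N))).deriv
  constructor
  · rw [hvd]
    field_simp
    linarith [hlast]
  · rw [hvd]
    constructor
    · intro h; rw [← hlast, h, mul_zero]
    · intro h
      have h2 := hlast
      rw [h] at h2
      exact (mul_eq_zero.mp h2).resolve_left hJdet
end

section
/- Let G be a core input-output network with super-simple nodes ι = ρ_1 > ρ_2 > ... > ρ_{q+1} = o in downstream order. Then every ιo-simple path S of G decomposes uniquely as a concatenation S = S_1 · S_2 ⋯ S_q, where each S_i is a simple path from ρ_i to ρ_{i+1} all of whose interior nodes are simple nodes lying between ρ_i and ρ_{i+1} (i.e., interior nodes of S_i belong to the super-simple subnetwork L(ρ_i, ρ_{i+1}) and are not super-simple). -/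
namespace List

variable {α : Type*}

theorem extract_append_extract (l : List α) {i j k : ℕ} (hij : i ≤ j) (hjk : j ≤ k) :
    l.extract i j ++ l.extract j k = l.extract i k := by
  simp only [extract_eq_take_drop]
  rw [show k - i = (j - i) + (k - j) by omega, take_add, drop_drop, Nat.add_sub_cancel' hij]

theorem extract_succ (l : List α) {i : ℕ} (hi : i < l.length) :
    l.extract i (i + 1) = [l[i]] := by
  rw [extract_eq_take_drop, drop_eq_getElem_cons hi, Nat.add_sub_cancel_left, take_one, head?_cons,
    Option.toList_some]

theorem extract_eq_cons (l : List α) {i j : ℕ} (hij : i < j) (hj : j ≤ l.length) :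
    l.extract i j = l[i] :: l.extract (i + 1) j := by
  rw [← extract_append_extract l (Nat.le_succ i) hij, extract_succ l (by omega), singleton_append]

theorem flatten_ofFn_extract (l : List α) {q : ℕ} {n : Fin (q + 1) → ℕ} (hn : Monotone n) :
    (ofFn fun i : Fin q => l.extract (n i.castSucc) (n i.succ)).flatten
      = l.extract (n 0) (n (Fin.last q)) := by
  induction q with
  | zero => simp
  | succ q ih =>
    rw [ofFn_succ', concat_eq_append, flatten_concat]
    simp only [Fin.succ_castSucc]
    rw [ih (n := fun i => n i.castSucc) (hn.comp Fin.strictMono_castSucc.monotone),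
      Fin.castSucc_zero, Fin.succ_last]
    exact extract_append_extract l (hn (Fin.zero_le _)) (hn (Fin.le_last _))

theorem Nodup.idxOf_between_of_mem_extract [DecidableEq α] {l : List α} (hl : l.Nodup)
    {i j : ℕ} {v : α} (hv : v ∈ l.extract i j) : i ≤ l.idxOf v ∧ l.idxOf v < j := by
  obtain ⟨k, hk, rfl⟩ := getElem_of_mem hv
  simp only [extract_eq_take_drop, length_take, length_drop, lt_min_iff, getElem_take,
    getElem_drop] at hk ⊢
  rw [hl.idxOf_getElem]
  omega

def subpath [DecidableEq α] (l : List α) (x y : α) : List α :=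
  l.extract (l.idxOf x) (l.idxOf y + 1)

section subpath

variable [DecidableEq α] {l : List α} {x y : α}

theorem subpath_sublist : l.subpath x y <+ l :=
  (take_sublist _ _).trans (drop_sublist _ _)

theorem subpath_eq_extract_append (hy : y ∈ l) (hxy : l.idxOf x ≤ l.idxOf y) :
    l.subpath x y = l.extract (l.idxOf x) (l.idxOf y) ++ [y] := by
  have hy' : l.idxOf y < l.length := idxOf_lt_length_iff.2 hy
  rw [subpath, ← extract_append_extract l hxy (Nat.le_succ _), extract_succ l hy', getElem_idxOf]

theorem subpath_eq_cons (hy : y ∈ l) (hxy : l.idxOf x ≤ l.idxOf y) :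
    l.subpath x y = x :: l.extract (l.idxOf x + 1) (l.idxOf y + 1) := by
  have hy' : l.idxOf y < l.length := idxOf_lt_length_iff.2 hy
  rw [subpath, extract_eq_cons l (Nat.lt_succ_of_le hxy) hy', getElem_idxOf]

theorem Nodup.idxOf_strictly_between_of_mem_subpath (hl : l.Nodup) {v : α}
    (hv : v ∈ l.subpath x y) (hvx : v ≠ x) (hvy : v ≠ y) :
    l.idxOf x < l.idxOf v ∧ l.idxOf v < l.idxOf y := by
  have hvl : v ∈ l := subpath_sublist.subset hv
  obtain ⟨h₁, h₂⟩ := hl.idxOf_between_of_mem_extract hv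
  exact ⟨h₁.lt_of_ne fun h => hvx ((idxOf_inj hvl).1 h.symm),
    (Nat.le_of_lt_succ h₂).lt_of_ne fun h => hvy ((idxOf_inj hvl).1 h)⟩

end subpath

def IsBlock (P : α → Prop) (l : List α) : Prop :=
  ∃ a t, l = a :: t ∧ P a ∧ ∀ v ∈ t, ¬ P v

section IsBlock

variable {P : α → Prop}

theorem append_inj_of_forall_not_of_head? {t t' r r' : List α} (ht : ∀ v ∈ t, ¬ P v)
    (ht' : ∀ v ∈ t', ¬ P v) (hr : ∀ x ∈ r.head?, P x) (hr' : ∀ x ∈ r'.head?, P x)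
    (h : t ++ r = t' ++ r') : t = t' ∧ r = r' := by
  classical
  have key : ∀ {t r : List α}, (∀ v ∈ t, ¬ P v) → (∀ x ∈ r.head?, P x) →
      (t ++ r).takeWhile (fun v => !decide (P v)) = t := by
    intro t r ht hr
    rw [takeWhile_append_of_pos (by simpa using ht)]
    cases r with
    | nil => simp
    | cons x r => simp [hr x rfl]
  have htt' : t = t' := by rw [← key ht hr, h, key ht' hr']
  exact ⟨htt', append_cancel_left (htt' ▸ h)⟩

theorem IsBlock.head?_flatten_ofFn {q : ℕ} {f : Fin q → List α} (hf : ∀ i, (f i).IsBlock P) :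
    ∀ x ∈ (ofFn f).flatten.head?, P x := by
  cases q with
  | zero => simp
  | succ q =>
    obtain ⟨a, t, hfa, ha, -⟩ := hf 0
    simpa [ofFn_succ, hfa] using ha

theorem IsBlock.eq_of_flatten_ofFn_eq {q : ℕ} {f g : Fin q → List α}
    (hf : ∀ i, (f i).IsBlock P) (hg : ∀ i, (g i).IsBlock P)
    (h : (ofFn f).flatten = (ofFn g).flatten) : f = g := by
  induction q with
  | zero => exact funext fun i => i.elim0
  | succ q ih =>
    obtain ⟨a, t, hfa, -, ht⟩ := hf 0
    obtain ⟨a', t', hga, -, ht'⟩ := hg 0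
    rw [ofFn_succ, ofFn_succ, flatten_cons, flatten_cons, hfa, hga, cons_append, cons_append,
      cons.injEq] at h
    obtain ⟨rfl, h⟩ := h
    obtain ⟨rfl, hrest⟩ := append_inj_of_forall_not_of_head? ht ht'
      (head?_flatten_ofFn fun i => hf i.succ) (head?_flatten_ofFn fun i => hg i.succ) h
    have htail := ih (fun i => hf i.succ) (fun i => hg i.succ) hrest
    funext i
    cases i using Fin.cases with
    | zero => rw [hfa, hga]
    | succ i => exact congrFun htail i

end IsBlock

end List

section IsSimplePath

variable {V : Type*} {Adj : V → V → Prop} {a b : V} {l : List V}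

theorem IsSimplePath.subpath [DecidableEq V] (h : IsSimplePath Adj a b l) {x y : V}
    (hy : y ∈ l) (hxy : l.idxOf x ≤ l.idxOf y) :
    IsSimplePath Adj x y (l.subpath x y) := by
  refine ⟨(h.1.drop _).take _, ?_, ?_, h.2.2.2.sublist List.subpath_sublist⟩
  · rw [List.subpath_eq_cons hy hxy, List.head?_cons]
  · rw [List.subpath_eq_extract_append hy hxy, List.getLast?_concat]

theorem IsSimplePath.subpath_self [DecidableEq V] (h : IsSimplePath Adj a b l) :
    l.subpath a b = l := by
  obtain ⟨-, hhead, hlast, hnodup⟩ := h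
  have hb : l.idxOf b + 1 = l.length := by
    rw [← List.dropLast_append_getLast? b hlast] at hnodup ⊢
    have hbl : b ∉ l.dropLast := fun hb => List.disjoint_of_nodup_append hnodup hb (by simp)
    simp [List.idxOf_append_of_notMem hbl]
  obtain ⟨t, rfl⟩ := List.head?_eq_some_iff.1 hhead
  rw [List.subpath, List.idxOf_cons_self, hb, List.extract_eq_take_drop, List.drop_zero,
    Nat.sub_zero, List.take_length]

theorem IsSimplePath.eq_cons_append (h : IsSimplePath Adj a b l) (hab : a ≠ b) :
    ∃ t, l = a :: t ++ [b] := by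
  obtain ⟨-, hhead, hlast, -⟩ := h
  rw [← List.dropLast_append_getLast? b hlast] at hhead ⊢
  cases hl : l.dropLast with
  | nil =>
    rw [hl, List.nil_append, List.head?_singleton, Option.some_inj] at hhead
    exact absurd hhead.symm hab
  | cons c t =>
    rw [hl, List.cons_append, List.head?_cons, Option.some_inj] at hhead
    exact ⟨t, by rw [hhead]⟩

theorem IsSimplePath.isBlock_dropLast {P : V → Prop} (h : IsSimplePath Adj a b l) (hab : a ≠ b)
    (ha : P a) (hint : ∀ v ∈ l, v ≠ a → v ≠ b → ¬ P v) : l.dropLast.IsBlock P := by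
  obtain ⟨t, rfl⟩ := h.eq_cons_append hab
  have hnd := List.nodup_cons.1 h.2.2.2
  refine ⟨a, t, List.dropLast_concat, ha, fun v hv => hint v (by simp [hv]) ?_ ?_⟩
  · rintro rfl
    exact hnd.1 (List.mem_append_left _ hv)
  · rintro rfl
    exact List.disjoint_of_nodup_append hnd.2 hv (List.mem_singleton_self v)

theorem IsSimplePath.eq_flatten_ofFn_subpath [DecidableEq V] (h : IsSimplePath Adj a b l)
    {q : ℕ} {ρ : Fin (q + 1) → V} (hρ : ∀ i, ρ i ∈ l) (hmono : Monotone fun i => l.idxOf (ρ i))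
    (h0 : ρ 0 = a) (hlast : ρ (Fin.last q) = b) :
    l = (List.ofFn fun i : Fin q => (l.subpath (ρ i.castSucc) (ρ i.succ)).dropLast).flatten
      ++ [b] := by
  subst h0 hlast
  have hseg : ∀ i : Fin q, (l.subpath (ρ i.castSucc) (ρ i.succ)).dropLast
      = l.extract (l.idxOf (ρ i.castSucc)) (l.idxOf (ρ i.succ)) := fun i => by
    rw [List.subpath_eq_extract_append (hρ _) (hmono (Fin.castSucc_le_succ i)),
      List.dropLast_concat]
  simp_rw [hseg]
  rw [List.flatten_ofFn_extract l hmono,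
    ← List.subpath_eq_extract_append (hρ _) (hmono (Fin.zero_le _)), h.subpath_self]

theorem eq_of_flatten_ofFn_dropLast_eq {q : ℕ} {ρ : Fin (q + 1) → V}
    (hρ : ∀ i : Fin q, ρ i.castSucc ≠ ρ i.succ) {f g : Fin q → List V}
    (hf : ∀ i, IsSimplePath Adj (ρ i.castSucc) (ρ i.succ) (f i))
    (hf' : ∀ i, ∀ v ∈ f i, v ≠ ρ i.castSucc → v ≠ ρ i.succ → v ∉ Set.range ρ)
    (hg : ∀ i, IsSimplePath Adj (ρ i.castSucc) (ρ i.succ) (g i))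
    (hg' : ∀ i, ∀ v ∈ g i, v ≠ ρ i.castSucc → v ≠ ρ i.succ → v ∉ Set.range ρ)
    (h : (List.ofFn fun i => (f i).dropLast).flatten
      = (List.ofFn fun i => (g i).dropLast).flatten) :
    f = g := by
  have hdrop := List.IsBlock.eq_of_flatten_ofFn_eq
    (fun i => (hf i).isBlock_dropLast (hρ i) ⟨_, rfl⟩ (hf' i))
    (fun i => (hg i).isBlock_dropLast (hρ i) ⟨_, rfl⟩ (hg' i)) h
  funext i
  rw [← List.dropLast_append_getLast? _ (hf i).2.2.1,
    ← List.dropLast_append_getLast? _ (hg i).2.2.1, congrFun hdrop i]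

end IsSimplePath

theorem stmt13_general {V : Type*} [DecidableEq V] (Adj : V → V → Prop)
    (ι o : V)
    (q : ℕ) (ρ : Fin (q+1) → V)
    (h0 : ρ 0 = ι) (hlast : ρ (Fin.last q) = o)
    (hss : ∀ v : V, (∀ l : List V, IsSimplePath Adj ι o l → v ∈ l) ↔ v ∈ Set.range ρ)
    (horder : ∀ l : List V, IsSimplePath Adj ι o l →
      ∀ i j : Fin (q+1), i < j → l.idxOf (ρ i) < l.idxOf (ρ j))
    (S : List V) (hS : IsSimplePath Adj ι o S) :
    ∃! segs : Fin q → List V,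
      (∀ i : Fin q, IsSimplePath Adj (ρ i.castSucc) (ρ i.succ) (segs i)) ∧
      (∀ i : Fin q, ∀ v ∈ segs i, v ≠ ρ i.castSucc → v ≠ ρ i.succ →
        ((∃ l : List V, IsSimplePath Adj ι o l ∧ v ∈ l) ∧
         ¬ (∀ l : List V, IsSimplePath Adj ι o l → v ∈ l) ∧
         (∃ l : List V, IsSimplePath Adj ι o l ∧
           l.idxOf (ρ i.castSucc) < l.idxOf v ∧
           l.idxOf v < l.idxOf (ρ i.succ)))) ∧
      S = (List.ofFn (fun i : Fin q => (segs i).dropLast)).flatten ++ [o] := by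
  have hmem : ∀ i, ρ i ∈ S := fun i => (hss _).2 ⟨i, rfl⟩ S hS
  have hidx : StrictMono fun i => S.idxOf (ρ i) := fun i j => horder S hS i j
  refine existsUnique_of_exists_of_unique
    ⟨fun i => S.subpath (ρ i.castSucc) (ρ i.succ),
      fun i => hS.subpath (hmem _) (hidx.monotone (Fin.castSucc_le_succ i)),
      fun i v hv hva hvb => ?_, hS.eq_flatten_ofFn_subpath hmem hidx.monotone h0 hlast⟩ ?_
  · obtain ⟨h₁, h₂⟩ := hS.2.2.2.idxOf_strictly_between_of_mem_subpath hv hva hvb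
    refine ⟨⟨S, hS, List.subpath_sublist.subset hv⟩, fun hall => ?_, S, hS, h₁, h₂⟩
    obtain ⟨j, rfl⟩ := (hss _).1 hall
    exact (hidx.lt_iff_lt.1 h₂).not_ge (Fin.castSucc_lt_iff_succ_le.1 (hidx.lt_iff_lt.1 h₁))
  · rintro f g ⟨hf, hf', hfS⟩ ⟨hg, hg', hgS⟩
    exact eq_of_flatten_ofFn_dropLast_eq
      (fun i h => (hidx Fin.castSucc_lt_succ).ne (congrArg S.idxOf h)) hf
      (fun i v hv hva hvb hvρ => (hf' i v hv hva hvb).2.1 ((hss v).2 hvρ)) hg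
      (fun i v hv hva hvb hvρ => (hg' i v hv hva hvb).2.1 ((hss v).2 hvρ))
      (List.append_cancel_right (hfS.symm.trans hgS))

/-- Every `ιo`-simple path decomposes uniquely as a concatenation of simple-path
segments joining consecutive super-simple nodes `ρ_i → ρ_{i+1}`, all of whose
interior nodes are non-super-simple simple nodes lying between `ρ_i` and
`ρ_{i+1}`. -/
theorem stmt13 {V : Type*} [Fintype V] [DecidableEq V] (Adj : V → V → Prop)
    (ι o : V) (hio : ι ≠ o)
    (hcore : ∀ v : V, Relation.ReflTransGen Adj ι v ∧ Relation.ReflTransGen Adj v o)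
    (q : ℕ) (hq : 1 ≤ q) (ρ : Fin (q+1) → V) (hinj : Function.Injective ρ)
    (h0 : ρ 0 = ι) (hlast : ρ (Fin.last q) = o)
    (hss : ∀ v : V, (∀ l : List V, IsSimplePath Adj ι o l → v ∈ l) ↔ v ∈ Set.range ρ)
    (horder : ∀ l : List V, IsSimplePath Adj ι o l →
      ∀ i j : Fin (q+1), i < j → l.idxOf (ρ i) < l.idxOf (ρ j))
    (S : List V) (hS : IsSimplePath Adj ι o S) :
    ∃! segs : Fin q → List V,
      (∀ i : Fin q, IsSimplePath Adj (ρ i.castSucc) (ρ i.succ) (segs i)) ∧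
      (∀ i : Fin q, ∀ v ∈ segs i, v ≠ ρ i.castSucc → v ≠ ρ i.succ →
        ((∃ l : List V, IsSimplePath Adj ι o l ∧ v ∈ l) ∧
         ¬ (∀ l : List V, IsSimplePath Adj ι o l → v ∈ l) ∧
         (∃ l : List V, IsSimplePath Adj ι o l ∧
           l.idxOf (ρ i.castSucc) < l.idxOf v ∧
           l.idxOf v < l.idxOf (ρ i.succ)))) ∧
      S = (List.ofFn (fun i : Fin q => (segs i).dropLast)).flatten ++ [o] :=
  stmt13_general Adj ι o q ρ h0 hlast hss horder S hS
end
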